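/- arXiv:2601.01771 — 3 statements merged into one kernel-verified Lean document; each statement's English description precedes it below -/
import Mathlib

section
/- The subgroup of GL(3,ℝ) generated by the matrices τ₁ and δ is isomorphic to the alternating group A₄ (the group of even permutations of a four-element set). -/
open Matrix

/-- The matrix representing the automorphism δ of `V_{L₂}`. -/
noncomputable def δ : GL (Fin 3) ℝ :=
  Matrix.GeneralLinearGroup.mkOfDetNeZero !![0,1,0; 0,0,-1; -1,0,0]
    (by simp [Matrix.det_fin_three])

/-- The matrix representing the automorphism τ₁ of `V_{L₂}`. -/
noncomputable def τ₁ : GL (Fin 3) ℝ :=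
  Matrix.GeneralLinearGroup.mkOfDetNeZero !![1,0,0; 0,-1,0; 0,0,-1]
    (by simp [Matrix.det_fin_three])

/-- The matrix representing the automorphism τ₂ of `V_{L₂}`. -/
noncomputable def τ₂ : GL (Fin 3) ℝ :=
  Matrix.GeneralLinearGroup.mkOfDetNeZero !![-1,0,0; 0,1,0; 0,0,-1]
    (by simp [Matrix.det_fin_three])

/-- The matrix representing the automorphism ρ of `V_{L₂}`. -/
noncomputable def ρ : GL (Fin 3) ℝ :=
  Matrix.GeneralLinearGroup.mkOfDetNeZero !![-1,0,0; 0,0,1; 0,1,0]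
    (by simp [Matrix.det_fin_three])

/-!
The vertices `(1,1,1), (1,-1,-1), (-1,1,-1), (-1,-1,1)` of a regular tetrahedron are permuted by
`τ₁` as `(0 1)(2 3)` and by `δ` as `(0 1 2)`. Conversely, the columns `v₀, …, v₃` of the vertex
matrix `V` satisfy `V Vᵀ = 4` and `Vᵀ V = 4 - J` (`J` the all-ones matrix), so every permutation `σ`
of them is realised by the linear map `¼ Σₖ v_{σ k} v_kᵀ`; this is a faithful representation of
`S₄` on `ℝ³`. It maps `A₄`, which is generated by `(0 1)(2 3)` and `(0 1 2)`, onto `⟨τ₁, δ⟩`.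
-/

open Equiv

namespace Matrix

theorem submatrix_perm_mul_ones {R l n : Type*} [NonAssocSemiring R] [Fintype n]
    (A : Matrix l n R) (σ : Perm n) :
    A.submatrix id σ * (of fun _ _ => 1 : Matrix n n R) = A * (of fun _ _ => 1 : Matrix n n R) := by
  ext i j
  simpa [mul_apply] using Equiv.sum_comp σ (A i)

noncomputable def simplexRep {K m n : Type*} [Field K] [Fintype n] (V : Matrix m n K) (c : K)
    (σ : Perm n) : Matrix m m K :=
  c⁻¹ • (V.submatrix id σ * Vᵀ)

variable {K m n : Type*} [Field K] [Fintype m] [DecidableEq n] {V : Matrix m n K} {c : K}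

theorem transpose_injective_of_gram (hc : c ≠ 0) (hVtV : Vᵀ * V = c • 1 - of fun _ _ => 1) :
    Function.Injective Vᵀ := by
  intro k l h
  have hgram : (Vᵀ * V) k k = (Vᵀ * V) l k := by simp only [mul_apply, h]
  by_contra hkl
  simp [hVtV, Ne.symm hkl, hc] at hgram

variable [Fintype n] [DecidableEq m]

theorem mul_ones_eq_zero_of_gram (hV : V * Vᵀ = c • 1)
    (hVtV : Vᵀ * V = c • 1 - of fun _ _ => 1) : V * (of fun _ _ => 1 : Matrix n n K) = 0 := by
  have h : V * (Vᵀ * V) = V * Vᵀ * V := (Matrix.mul_assoc _ _ _).symm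
  rwa [hVtV, hV, Matrix.mul_sub, Matrix.mul_smul, Matrix.smul_mul, Matrix.mul_one, Matrix.one_mul,
    sub_eq_self] at h

section

variable (hc : c ≠ 0) (hV : V * Vᵀ = c • 1)
include hc hV

omit [DecidableEq n] in
theorem simplexRep_eq_of_mul_eq {σ : Perm n} {M : Matrix m m K}
    (h : M * V = V.submatrix id σ) : simplexRep V c σ = M := by
  rw [simplexRep, ← h, Matrix.mul_assoc, hV, Matrix.mul_smul, Matrix.mul_one, smul_smul,
    inv_mul_cancel₀ hc, one_smul]

omit [DecidableEq n] in
theorem simplexRep_one : simplexRep V c 1 = 1 :=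
  simplexRep_eq_of_mul_eq hc hV (by simp)

variable (hVtV : Vᵀ * V = c • 1 - of fun _ _ => 1)
include hVtV

theorem simplexRep_mul_eq_submatrix (σ : Perm n) :
    simplexRep V c σ * V = V.submatrix id σ := by
  rw [simplexRep, Matrix.smul_mul, Matrix.mul_assoc, hVtV, Matrix.mul_sub, Matrix.mul_smul,
    Matrix.mul_one, submatrix_perm_mul_ones, mul_ones_eq_zero_of_gram hV hVtV, sub_zero,
    smul_smul, inv_mul_cancel₀ hc, one_smul]

theorem simplexRep_mul (σ τ : Perm n) :
    simplexRep V c (σ * τ) = simplexRep V c σ * simplexRep V c τ := by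
  have h : simplexRep V c σ * V.submatrix id τ = V.submatrix id (σ * τ) :=
    congrArg (submatrix · id τ) (simplexRep_mul_eq_submatrix hc hV hVtV σ)
  rw [simplexRep, ← h, Matrix.mul_assoc, ← Matrix.mul_smul]
  rfl

theorem simplexRep_injective : Function.Injective (simplexRep V c) := by
  intro σ τ h
  have hcols := simplexRep_mul_eq_submatrix hc hV hVtV σ
  rw [h, simplexRep_mul_eq_submatrix hc hV hVtV τ] at hcols
  ext k : 1
  exact transpose_injective_of_gram hc hVtV (funext fun i => congrFun (congrFun hcols i) k).symm

noncomputable def simplexRepHom : Perm n →* Matrix m m K where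
  toFun := simplexRep V c
  map_one' := simplexRep_one hc hV
  map_mul' := simplexRep_mul hc hV hVtV

end

end Matrix

def tetrahedron : Matrix (Fin 3) (Fin 4) ℝ := !![1, 1, -1, -1; 1, -1, 1, -1; 1, -1, -1, 1]

theorem tetrahedron_mul_transpose : tetrahedron * tetrahedronᵀ = (4 : ℝ) • 1 := by
  ext i j
  fin_cases i <;> fin_cases j <;> simp [tetrahedron, mul_apply, Fin.sum_univ_four, one_apply] <;>
    norm_num

theorem transpose_mul_tetrahedron :
    tetrahedronᵀ * tetrahedron = (4 : ℝ) • 1 - of fun _ _ => 1 := by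
  ext i j
  fin_cases i <;> fin_cases j <;> simp [tetrahedron, mul_apply, Fin.sum_univ_three, one_apply] <;>
    norm_num

noncomputable def tetrahedralRep : Perm (Fin 4) →* GL (Fin 3) ℝ :=
  (simplexRepHom four_ne_zero tetrahedron_mul_transpose transpose_mul_tetrahedron).toHomUnits

theorem tetrahedralRep_injective : Function.Injective tetrahedralRep := fun _ _ h =>
  simplexRep_injective four_ne_zero tetrahedron_mul_transpose transpose_mul_tetrahedron
    (congrArg Units.val h)

theorem tetrahedralRep_eq_of_mul_eq {σ : Perm (Fin 4)} {g : GL (Fin 3) ℝ}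
    (h : g.val * tetrahedron = tetrahedron.submatrix id σ) : tetrahedralRep σ = g :=
  Units.ext (simplexRep_eq_of_mul_eq four_ne_zero tetrahedron_mul_transpose h)

def τ₁Perm : Perm (Fin 4) := swap 0 1 * swap 2 3

def δPerm : Perm (Fin 4) := swap 0 1 * swap 1 2

theorem tetrahedralRep_τ₁Perm : tetrahedralRep τ₁Perm = τ₁ := by
  refine tetrahedralRep_eq_of_mul_eq ?_
  ext i k
  fin_cases i <;> fin_cases k <;>
    simp [τ₁, τ₁Perm, tetrahedron, mul_apply, Fin.sum_univ_three, swap_apply_def]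

theorem tetrahedralRep_δPerm : tetrahedralRep δPerm = δ := by
  refine tetrahedralRep_eq_of_mul_eq ?_
  ext i k
  fin_cases i <;> fin_cases k <;>
    simp [δ, δPerm, tetrahedron, mul_apply, Fin.sum_univ_three, swap_apply_def]

/-- `A₄ = V₄ ⋊ ⟨δPerm⟩`, the Klein four-group `V₄` consisting of `1`, `τ₁Perm` and its conjugates
by `δPerm^{±1}`. -/
theorem exists_eq_mul_pow_of_sign_eq_one {s : Perm (Fin 4)} (hs : Perm.sign s = 1) :
    ∃ k ∈ [1, τ₁Perm, δPerm * τ₁Perm * δPerm⁻¹, δPerm⁻¹ * τ₁Perm * δPerm],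
      ∃ i : Fin 3, s = k * δPerm ^ (i : ℕ) := by
  revert s
  decide

theorem alternatingGroup_fin_four_eq_closure :
    alternatingGroup (Fin 4) = Subgroup.closure {τ₁Perm, δPerm} := by
  have ha : τ₁Perm ∈ Subgroup.closure {τ₁Perm, δPerm} := Subgroup.subset_closure (by simp)
  have hb : δPerm ∈ Subgroup.closure {τ₁Perm, δPerm} := Subgroup.subset_closure (by simp)
  refine le_antisymm (fun s hs => ?_) ((Subgroup.closure_le _).2 ?_)
  · obtain ⟨k, hk, i, rfl⟩ := exists_eq_mul_pow_of_sign_eq_one (Perm.mem_alternatingGroup.1 hs)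
    refine mul_mem ?_ (pow_mem hb _)
    simp only [List.mem_cons, List.not_mem_nil, or_false] at hk
    rcases hk with rfl | rfl | rfl | rfl
    · exact one_mem _
    · exact ha
    · exact mul_mem (mul_mem hb ha) (inv_mem hb)
    · exact mul_mem (mul_mem (inv_mem hb) ha) hb
  · rintro _ (rfl | rfl) <;> exact Perm.mem_alternatingGroup.2 (by decide)

/-- The subgroup of GL(3,ℝ) generated by τ₁ and δ is isomorphic to the
alternating group A₄. -/
theorem subgroup_closure_tau1_delta_iso_A4 :
    Nonempty ((Subgroup.closure {τ₁, δ} : Subgroup (GL (Fin 3) ℝ)) ≃* alternatingGroup (Fin 4)) := by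
  have hmap : (alternatingGroup (Fin 4)).map tetrahedralRep = Subgroup.closure {τ₁, δ} := by
    rw [alternatingGroup_fin_four_eq_closure, MonoidHom.map_closure, Set.image_pair,
      tetrahedralRep_τ₁Perm, tetrahedralRep_δPerm]
  exact ⟨(((alternatingGroup (Fin 4)).equivMapOfInjective _ tetrahedralRep_injective).trans
    (MulEquiv.subgroupCongr hmap)).symm⟩
end

section
/- The subgroup of GL(3,ℝ) generated by the matrices τ₂ and δ is isomorphic to the alternating group A₄ (the group of even permutations of a four-element set). -/
/-!
The four diagonals of the cube `[-1, 1]³` are the columns of a `3 × 4` matrix `U` with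
`U Uᵀ = 4` and `Uᵀ U = 4 - J`. Since the Gram matrix `4 - J` commutes with permutation matrices,
`σ ↦ ¼ U P_σ Uᵀ` is a faithful representation of `S₄` permuting the diagonals, and it sends a
double transposition to `τ₂` and a 3-cycle to `δ`. These two elements generate `A₄`: the subgroup
they generate has order divisible by 6, hence index 1 or 2 in `A₄`, and `A₄` has no subgroup of
index 2.
-/

open Matrix

open Equiv

namespace Matrix

variable {K m ι : Type*} [DecidableEq ι]

lemma permMatrix_eq_one_iff [Semiring K] [Nontrivial K] {σ : Perm ι} :
    σ.permMatrix K = 1 ↔ σ = 1 := by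
  refine ⟨fun h => Equiv.ext fun i => ?_, fun h => h ▸ permMatrix_one⟩
  exact (by simpa [one_apply] using congrFun (congrFun h i) (σ i) : i = σ i).symm

variable [Fintype ι]

lemma permMatrix_mul_ones [NonAssocSemiring K] (σ : Perm ι) :
    σ.permMatrix K * of (fun _ _ => 1) = of fun _ _ => 1 := by
  ext i j
  simp [mul_apply]

lemma ones_mul_permMatrix [NonAssocSemiring K] (σ : Perm ι) :
    of (fun _ _ => 1) * σ.permMatrix K = of fun _ _ => 1 := by
  ext i j
  simp [mul_apply, ← Equiv.eq_symm_apply]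

lemma mul_inv_permMatrix [NonAssocSemiring K] (M : Matrix m ι K) (σ : Perm ι) :
    M * σ⁻¹.permMatrix K = M.submatrix id σ :=
  PEquiv.mul_toMatrix_toPEquiv M σ⁻¹

variable [Field K] [Fintype m] [DecidableEq m]

/-- The columns of `U` form a tight frame (`U Uᵀ = a`) whose Gram matrix `a + b J` is invariant
under permutations of the columns, as for the vertices of a regular simplex. -/
structure IsSimplexFrame (U : Matrix m ι K) (a b : K) : Prop where
  ne_zero : a ≠ 0
  mul_transpose : U * Uᵀ = a • 1
  transpose_mul : Uᵀ * U = a • 1 + b • of fun _ _ => 1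

namespace IsSimplexFrame

variable {U : Matrix m ι K} {a b : K}

lemma transpose_mul_commute (hU : U.IsSimplexFrame a b) (σ : Perm ι) :
    Commute (Uᵀ * U) (σ.permMatrix K) := by
  simp only [Commute, SemiconjBy, hU.transpose_mul, add_mul, mul_add, Matrix.smul_mul,
    Matrix.mul_smul, Matrix.one_mul, Matrix.mul_one, permMatrix_mul_ones, ones_mul_permMatrix]

lemma mul_permMatrix_mul_gram (hU : U.IsSimplexFrame a b) (σ : Perm ι) :
    U * σ.permMatrix K * (Uᵀ * U) = a • (U * σ.permMatrix K) := by
  rw [Matrix.mul_assoc, ← (hU.transpose_mul_commute σ).eq, ← Matrix.mul_assoc, ← Matrix.mul_assoc,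
    hU.mul_transpose, Matrix.smul_mul, Matrix.one_mul, Matrix.smul_mul]

noncomputable def permRep (hU : U.IsSimplexFrame a b) : Perm ι →* GL m K :=
  MonoidHom.toHomUnits
    { toFun σ := a⁻¹ • (U * σ⁻¹.permMatrix K * Uᵀ)
      map_one' := by
        rw [inv_one, permMatrix_one, Matrix.mul_one, hU.mul_transpose, inv_smul_smul₀ hU.ne_zero]
      map_mul' σ τ := by
        have hassoc : U * σ⁻¹.permMatrix K * Uᵀ * (U * τ⁻¹.permMatrix K * Uᵀ)
            = U * σ⁻¹.permMatrix K * (Uᵀ * U) * τ⁻¹.permMatrix K * Uᵀ := by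
          simp only [Matrix.mul_assoc]
        rw [Matrix.smul_mul, Matrix.mul_smul, smul_smul, hassoc, hU.mul_permMatrix_mul_gram,
          Matrix.smul_mul, Matrix.smul_mul, smul_smul, inv_mul_cancel_right₀ hU.ne_zero,
          _root_.mul_inv_rev, permMatrix_mul]
        simp only [Matrix.mul_assoc] }

lemma permRep_mul (hU : U.IsSimplexFrame a b) (σ : Perm ι) :
    (hU.permRep σ : Matrix m m K) * U = U * σ⁻¹.permMatrix K := by
  change a⁻¹ • (U * σ⁻¹.permMatrix K * Uᵀ) * U = _
  rw [Matrix.smul_mul, Matrix.mul_assoc _ Uᵀ, hU.mul_permMatrix_mul_gram,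
    inv_smul_smul₀ hU.ne_zero]

lemma permRep_eq_of_mul_eq (hU : U.IsSimplexFrame a b) {g : GL m K} {σ : Perm ι}
    (h : (g : Matrix m m K) * U = U * σ⁻¹.permMatrix K) : hU.permRep σ = g := by
  refine Units.ext ?_
  change a⁻¹ • (U * σ⁻¹.permMatrix K * Uᵀ) = _
  rw [← h, Matrix.mul_assoc, hU.mul_transpose, Matrix.mul_smul, Matrix.mul_one,
    inv_smul_smul₀ hU.ne_zero]

lemma permRep_injective (hU : U.IsSimplexFrame a b) : Function.Injective hU.permRep := by
  rw [injective_iff_map_eq_one]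
  intro σ hσ
  have hfix : U * σ⁻¹.permMatrix K = U := by
    rw [← hU.permRep_mul, hσ, Units.val_one, Matrix.one_mul]
  have hgram : Uᵀ * U * σ⁻¹.permMatrix K = Uᵀ * U := by
    rw [Matrix.mul_assoc, hfix]
  rw [hU.transpose_mul, add_mul, Matrix.smul_mul, Matrix.smul_mul, Matrix.one_mul,
    ones_mul_permMatrix, add_left_inj, (smul_right_injective _ hU.ne_zero).eq_iff,
    permMatrix_eq_one_iff] at hgram
  exact inv_eq_one.mp hgram

end IsSimplexFrame

end Matrix

theorem Subgroup.closure_pair_eq_top_of_card_eq_twelve {G : Type*} [Group G]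
    (hG : Nat.card G = 12) (hno_index_two : ∀ H : Subgroup G, H.index ≠ 2) {x y : G}
    (hx : orderOf x = 2) (hy : orderOf y = 3) : closure {x, y} = ⊤ := by
  set H := closure {x, y}
  obtain ⟨k, hk⟩ : 6 ∣ Nat.card H :=
    Nat.Coprime.mul_dvd_of_dvd_of_dvd (by norm_num)
      (hx ▸ H.orderOf_dvd_natCard (subset_closure (by simp)))
      (hy ▸ H.orderOf_dvd_natCard (subset_closure (by simp)))
  have hindex : H.index * k = 2 := by
    have := H.index_mul_card
    rw [hG, hk] at this
    lia
  rcases (Nat.dvd_prime Nat.prime_two).mp (Dvd.intro k hindex) with h | h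
  · exact index_eq_one.mp h
  · exact absurd h (hno_index_two H)

/-- A 3-cycle `g` is the square of `g ^ 2`, and a subgroup of index two contains every square. -/
theorem alternatingGroup.index_ne_two {α : Type*} [Fintype α] [DecidableEq α]
    (H : Subgroup (alternatingGroup α)) : H.index ≠ 2 := by
  intro h
  have hH : H = ⊤ := by
    rw [eq_top_iff, ← closure_isThreeCycles_eq_top, Subgroup.closure_le]
    intro g hg
    have hg3 : g ^ 3 = 1 := by
      rw [← orderOf_dvd_iff_pow_eq_one, ← Subgroup.orderOf_coe, hg.orderOf]
    have hsq : (g ^ 2) ^ 2 = g := by rw [← pow_mul, pow_succ, hg3, one_mul]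
    exact hsq ▸ Subgroup.sq_mem_of_index_two h _
  rw [hH, Subgroup.index_top] at h
  exact absurd h (by norm_num)

namespace Tetrahedral

def doubleTransposition : alternatingGroup (Fin 4) :=
  ⟨swap 0 2 * swap 1 3, Perm.mem_alternatingGroup.mpr (by decide)⟩

def threeCycle : alternatingGroup (Fin 4) :=
  ⟨swap 0 2 * swap 0 1, Perm.mem_alternatingGroup.mpr (by decide)⟩

lemma closure_doubleTransposition_threeCycle :
    Subgroup.closure {doubleTransposition, threeCycle} = ⊤ :=
  Subgroup.closure_pair_eq_top_of_card_eq_twelve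
    (by rw [nat_card_alternatingGroup, Nat.card_eq_fintype_card, Fintype.card_fin]; rfl)
    alternatingGroup.index_ne_two (orderOf_eq_prime (by decide) (by decide))
    (orderOf_eq_prime (by decide) (by decide))

def cubeDiagonals : Matrix (Fin 3) (Fin 4) ℝ :=
  !![1, 1, -1, -1; 1, -1, 1, -1; 1, -1, -1, 1]

lemma isSimplexFrame_cubeDiagonals : cubeDiagonals.IsSimplexFrame 4 (-1) where
  ne_zero := by norm_num
  mul_transpose := by
    ext i j
    fin_cases i <;> fin_cases j <;> simp [cubeDiagonals, mul_apply, Fin.sum_univ_four] <;> norm_num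
  transpose_mul := by
    ext i j
    fin_cases i <;> fin_cases j <;> simp [cubeDiagonals, mul_apply, Fin.sum_univ_three] <;> norm_num

lemma permRep_doubleTransposition :
    isSimplexFrame_cubeDiagonals.permRep doubleTransposition = τ₂ := by
  refine isSimplexFrame_cubeDiagonals.permRep_eq_of_mul_eq ?_
  rw [mul_inv_permMatrix]
  ext i j
  fin_cases i <;> fin_cases j <;>
    simp [τ₂, cubeDiagonals, doubleTransposition, mul_apply, Fin.sum_univ_three,
      swap_apply_of_ne_of_ne]

lemma permRep_threeCycle : isSimplexFrame_cubeDiagonals.permRep threeCycle = δ := by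
  refine isSimplexFrame_cubeDiagonals.permRep_eq_of_mul_eq ?_
  rw [mul_inv_permMatrix]
  ext i j
  fin_cases i <;> fin_cases j <;>
    simp [δ, cubeDiagonals, threeCycle, mul_apply, Fin.sum_univ_three, swap_apply_of_ne_of_ne]

end Tetrahedral

/-- The subgroup of GL(3,ℝ) generated by τ₂ and δ is isomorphic to the
alternating group A₄. -/
theorem subgroup_closure_tau2_delta_iso_A4 :
    Nonempty ((Subgroup.closure {τ₂, δ} : Subgroup (GL (Fin 3) ℝ)) ≃* alternatingGroup (Fin 4)) := by
  set ψ := Tetrahedral.isSimplexFrame_cubeDiagonals.permRep.comp (alternatingGroup (Fin 4)).subtype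
  have hψ : Function.Injective ψ :=
    Tetrahedral.isSimplexFrame_cubeDiagonals.permRep_injective.comp Subtype.val_injective
  have hrange : ψ.range = Subgroup.closure {τ₂, δ} := by
    rw [MonoidHom.range_eq_map, ← Tetrahedral.closure_doubleTransposition_threeCycle,
      MonoidHom.map_closure, Set.image_pair, ← Tetrahedral.permRep_doubleTransposition,
      ← Tetrahedral.permRep_threeCycle]
    rfl
  exact ⟨((MonoidHom.ofInjective hψ).trans (MulEquiv.subgroupCongr hrange)).symm⟩
end

section
/- The subgroup of GL(3,ℝ) generated by P = ρ·τ₂ and τ₂ equals the subgroup generated by τ₁, τ₂ and ρ, and this group is isomorphic to the dihedral group D₈ of order 8. -/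
/-!
`P` is a rotation of order 4 about the `x₁`-axis and `τ₂` is an involution conjugating it to
its inverse, so `r ↦ P`, `s ↦ τ₂` defines a homomorphism from the dihedral group of order 8
onto `⟨P, τ₂⟩`. It is injective because `P` has order 4 and `τ₂ ∉ ⟨P⟩`: otherwise `τ₂` would
commute with `P`, forcing `P = P⁻¹`. The two generating sets agree since `τ₁ = P²` and
`ρ = P τ₂`.
-/

open Matrix

/-- The matrix `P = ρ·τ₂`. -/
noncomputable def P : GL (Fin 3) ℝ := ρ * τ₂

theorem Subgroup.closure_pair_eq_closure_sq_mul {G : Type*} [Group G] (a b : G) :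
    closure {a, b} = closure {a ^ 2, b, a * b} := by
  apply le_antisymm
  · have hab : a * b ∈ closure {a ^ 2, b, a * b} := subset_closure (by simp)
    have hb : b ∈ closure {a ^ 2, b, a * b} := subset_closure (by simp)
    rw [closure_le, Set.insert_subset_iff, Set.singleton_subset_iff]
    exact ⟨by simpa using mul_mem hab (inv_mem hb), hb⟩
  · have ha : a ∈ closure {a, b} := subset_closure (by simp)
    have hb : b ∈ closure {a, b} := subset_closure (by simp)
    rw [closure_le, Set.insert_subset_iff, Set.insert_subset_iff, Set.singleton_subset_iff]
    exact ⟨pow_mem ha 2, hb, mul_mem ha hb⟩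

theorem notMem_zpowers_of_conj_eq_inv {G : Type*} [Group G] {a b : G}
    (hab : b * a * b⁻¹ = a⁻¹) (ha : a ^ 2 ≠ 1) : b ∉ Subgroup.zpowers a := by
  rintro ⟨k, rfl⟩
  have : a = a⁻¹ := by
    rwa [((Commute.refl a).zpow_left k).eq, mul_inv_cancel_right] at hab
  exact ha (by rw [sq]; exact mul_eq_one_iff_eq_inv.mpr this)

namespace DihedralGroup

variable {G : Type*} [Group G] {n : ℕ} {a b : G}

noncomputable def zpowMod (ha : a ^ n = 1) : ZMod n →+ Additive G :=
  ZMod.lift n ⟨zmultiplesHom _ (Additive.ofMul a), by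
    rw [zmultiplesHom_apply, natCast_zsmul, ← ofMul_pow, ha, ofMul_one]⟩

@[simp]
theorem toMul_zpowMod_intCast (ha : a ^ n = 1) (k : ℤ) :
    (zpowMod ha k).toMul = a ^ k := by
  simp [zpowMod, ← ofMul_zpow]

theorem toMul_zpowMod_mul (ha : a ^ n = 1) (hab : b * a * b⁻¹ = a⁻¹) (i : ZMod n) :
    (zpowMod ha i).toMul * b = b * (zpowMod ha (-i)).toMul := by
  obtain ⟨k, rfl⟩ := ZMod.intCast_surjective i
  rw [← Int.cast_neg, toMul_zpowMod_intCast, toMul_zpowMod_intCast, ← eq_mul_inv_iff_mul_eq,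
    ← conj_zpow, hab, _root_.inv_zpow', neg_neg]

noncomputable def lift (ha : a ^ n = 1) (hb : b ^ 2 = 1) (hab : b * a * b⁻¹ = a⁻¹) :
    DihedralGroup n →* G where
  toFun
    | r i => (zpowMod ha i).toMul
    | sr i => b * (zpowMod ha i).toMul
  map_one' := by
    show (zpowMod ha 0).toMul = 1
    simp
  map_mul' x y := by
    rcases x with i | i <;> rcases y with j | j
    · simp [map_add]
    · simp only [r_mul_sr, ← mul_assoc, toMul_zpowMod_mul ha hab, mul_assoc b, ← toMul_add,
        ← map_add, sub_eq_neg_add]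
    · simp [map_add, mul_assoc]
    · have hbb : b * b = 1 := by rw [← sq, hb]
      simp only [sr_mul_sr]
      rw [mul_assoc b, ← mul_assoc _ b, toMul_zpowMod_mul ha hab, ← mul_assoc, ← mul_assoc, hbb,
        one_mul, ← toMul_add, ← map_add, sub_eq_neg_add]

variable (ha : a ^ n = 1) (hb : b ^ 2 = 1) (hab : b * a * b⁻¹ = a⁻¹)

@[simp]
theorem lift_r (i : ZMod n) : lift ha hb hab (r i) = (zpowMod ha i).toMul := rfl

@[simp]
theorem lift_sr (i : ZMod n) : lift ha hb hab (sr i) = b * (zpowMod ha i).toMul := rfl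

theorem range_lift : (lift ha hb hab).range = Subgroup.closure {a, b} := by
  apply le_antisymm
  · rintro _ ⟨x, rfl⟩
    have ha' : a ∈ Subgroup.closure {a, b} := Subgroup.subset_closure (by simp)
    have hb' : b ∈ Subgroup.closure {a, b} := Subgroup.subset_closure (by simp)
    rcases x with i | i <;> obtain ⟨k, rfl⟩ := ZMod.intCast_surjective i
    · simpa using zpow_mem ha' k
    · simpa using mul_mem hb' (zpow_mem ha' k)
  · rw [Subgroup.closure_le]
    rintro _ (rfl | rfl)
    · exact ⟨r 1, by simpa using toMul_zpowMod_intCast ha 1⟩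
    · exact ⟨sr 0, by simp⟩

theorem lift_injective (hn : orderOf a = n) (hb' : b ∉ Subgroup.zpowers a) :
    Function.Injective (lift ha hb hab) := by
  rw [injective_iff_map_eq_one]
  rintro (i | i) h <;> obtain ⟨k, rfl⟩ := ZMod.intCast_surjective i <;>
    simp only [lift_r, lift_sr, toMul_zpowMod_intCast] at h
  · rw [← orderOf_dvd_iff_zpow_eq_one, hn, ← ZMod.intCast_zmod_eq_zero_iff_dvd] at h
    rw [h, r_zero]
  · refine absurd ?_ hb'
    rw [eq_inv_of_mul_eq_one_left h]
    exact inv_mem (zpow_mem (Subgroup.mem_zpowers a) k)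

noncomputable def mulEquivClosure (hn : orderOf a = n) (hb : b ^ 2 = 1)
    (hab : b * a * b⁻¹ = a⁻¹) (hb' : b ∉ Subgroup.zpowers a) :
    DihedralGroup n ≃* Subgroup.closure {a, b} :=
  have ha : a ^ n = 1 := hn ▸ pow_orderOf_eq_one a
  (MonoidHom.ofInjective (lift_injective ha hb hab hn hb')).trans
    (MulEquiv.subgroupCongr (range_lift ha hb hab))

end DihedralGroup

lemma τ₁_sq : τ₁ ^ 2 = 1 := by
  ext i j; fin_cases i <;> fin_cases j <;> simp [τ₁, sq, mul_apply, Fin.sum_univ_three]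

lemma τ₂_sq : τ₂ ^ 2 = 1 := by
  ext i j; fin_cases i <;> fin_cases j <;> simp [τ₂, sq, mul_apply, Fin.sum_univ_three]

lemma P_sq : P ^ 2 = τ₁ := by
  ext i j; fin_cases i <;> fin_cases j <;> simp [P, τ₁, τ₂, ρ, sq, mul_apply,
    Fin.sum_univ_three]

lemma τ₂_mul_P_mul_τ₂_mul_P : τ₂ * P * τ₂ * P = 1 := by
  ext i j; fin_cases i <;> fin_cases j <;> simp [P, τ₂, ρ, mul_apply, Fin.sum_univ_three]

lemma τ₁_ne_one : τ₁ ≠ 1 := by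
  intro h
  have h11 := congr_arg (fun g : GL (Fin 3) ℝ => (g : Matrix (Fin 3) (Fin 3) ℝ) 1 1) h
  norm_num [τ₁] at h11

lemma orderOf_P : orderOf P = 4 :=
  orderOf_eq_prime_pow (p := 2) (n := 1) (by rw [pow_one, P_sq]; exact τ₁_ne_one)
    (by rw [pow_succ, pow_one, pow_mul, P_sq, τ₁_sq])

lemma τ₂_inv : τ₂⁻¹ = τ₂ :=
  inv_eq_of_mul_eq_one_right (by rw [← sq, τ₂_sq])

lemma τ₂_conj_P : τ₂ * P * τ₂⁻¹ = P⁻¹ := by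
  rw [τ₂_inv]
  exact eq_inv_of_mul_eq_one_left τ₂_mul_P_mul_τ₂_mul_P

lemma P_mul_τ₂ : P * τ₂ = ρ := by
  rw [P, mul_assoc, ← sq, τ₂_sq, mul_one]

/-- The subgroup generated by `P = ρ·τ₂` and τ₂ equals the subgroup generated by
τ₁, τ₂ and ρ, and this group is isomorphic to the dihedral group D₈ of order 8. -/
theorem closure_P_tau2_eq_closure_tau1_tau2_rho_iso_D8 :
    (Subgroup.closure {P, τ₂} : Subgroup (GL (Fin 3) ℝ)) = Subgroup.closure {τ₁, τ₂, ρ} ∧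
    Nonempty ((Subgroup.closure {P, τ₂} : Subgroup (GL (Fin 3) ℝ)) ≃* DihedralGroup 4) := by
  refine ⟨?_, ⟨(DihedralGroup.mulEquivClosure orderOf_P τ₂_sq τ₂_conj_P ?_).symm⟩⟩
  · rw [Subgroup.closure_pair_eq_closure_sq_mul, P_sq, P_mul_τ₂]
  · refine notMem_zpowers_of_conj_eq_inv τ₂_conj_P ?_
    rw [P_sq]
    exact τ₁_ne_one
end
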